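/- Under the stated assumptions, if E[τ_b] < ∞ then the delayed partial sum satisfies the lower bound E[ Σ_{n=w+1}^{τ_b + w} Y_n ] ≥ μ^* (1 − q/w) · E[τ_b]. -/

import Mathlib

open MeasureTheory Filter Set
open scoped ENNReal

/-!
Write the delayed sum as `∑ₖ 1{k < τ} Y_{w+1+k}`. Up to a null set, `{k < τ}` is the event that
`S_{w+1}, …, S_k` all stay below `b`, so it lies in `𝒢_k = 𝒢_{(w+1+k)-w-1}`; conditioning on
`𝒢_k` gives `E[1{k < τ} Y_{w+1+k}] ≥ c_k P(k < τ)` with `c_k = μ*` off `N` and `c_k = 0` on `N`.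
The conditional second-moment bound gives `E[1{k < τ} |Y_{w+1+k}|] ≤ (1 + v) P(k < τ)`, whose sum
is `(1 + v) E[τ] < ∞`, so expectation and summation commute. Finally the density bound on `N`
gives `∑_{k<τ} c_k ≥ μ* (1 - q/w) τ` pointwise.
-/

section CondExp

variable {Ω : Type*} {m m0 : MeasurableSpace Ω} {μ : Measure Ω} [IsFiniteMeasure μ]
  {f : Ω → ℝ} {c : ℝ} {s t : Set Ω}

lemma mul_measureReal_le_setIntegral_of_le_condExp (hm : m ≤ m0) (hf : Integrable f μ)
    (hc : (fun _ => c) ≤ᵐ[μ] μ[f|m]) (ht : MeasurableSet[m] t) (hst : s =ᵐ[μ] t) :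
    c * μ.real s ≤ ∫ ω in s, f ω ∂μ := by
  rw [setIntegral_congr_set hst, measureReal_congr hst, ← setIntegral_condExp hm hf ht, mul_comm,
    ← smul_eq_mul, ← setIntegral_const]
  exact setIntegral_mono_ae (integrableOn_const (measure_ne_top _ _))
    integrable_condExp.integrableOn hc

lemma setIntegral_le_mul_measureReal_of_condExp_le (hm : m ≤ m0) (hf : Integrable f μ)
    (hc : μ[f|m] ≤ᵐ[μ] fun _ => c) (ht : MeasurableSet[m] t) :
    ∫ ω in t, f ω ∂μ ≤ c * μ.real t := by
  rw [← setIntegral_condExp hm hf ht, mul_comm, ← smul_eq_mul, ← setIntegral_const]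
  exact setIntegral_mono_ae integrable_condExp.integrableOn
    (integrableOn_const (measure_ne_top _ _)) hc

lemma setIntegral_abs_le_of_condExp_sq_le (hm : m ≤ m0) (hf : MemLp f 2 μ)
    (hc : μ[fun ω => f ω ^ 2|m] ≤ᵐ[μ] fun _ => c) (ht : MeasurableSet[m] t) (hst : s =ᵐ[μ] t) :
    ∫ ω in s, |f ω| ∂μ ≤ (1 + c) * μ.real s := by
  rw [setIntegral_congr_set hst, measureReal_congr hst]
  have hsq : Integrable (fun ω => f ω ^ 2) μ := hf.integrable_sq
  calc ∫ ω in t, |f ω| ∂μ ≤ ∫ ω in t, (1 + f ω ^ 2) ∂μ :=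
        setIntegral_mono (hf.integrable one_le_two).abs.integrableOn
          ((integrable_const 1).add hsq).integrableOn fun ω => by
            nlinarith [sq_abs (f ω), sq_nonneg (|f ω| - 1)]
    _ = μ.real t + ∫ ω in t, f ω ^ 2 ∂μ := by
        rw [integral_add (integrable_const 1).integrableOn hsq.integrableOn, setIntegral_const,
          smul_eq_mul, mul_one]
    _ ≤ (1 + c) * μ.real t := by
        linarith [setIntegral_le_mul_measureReal_of_condExp_le hm hsq hc ht]

end CondExp

lemma tsum_indicator_setOf_lt {Ω M : Type*} [AddCommMonoid M] [TopologicalSpace M]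
    (τ : Ω → ℕ) (g : ℕ → Ω → M) (ω : Ω) :
    ∑' k, {ω | k < τ ω}.indicator (g k) ω = ∑ k ∈ Finset.range (τ ω), g k ω := by
  rw [tsum_eq_sum (s := Finset.range (τ ω)) fun k hk =>
    indicator_of_notMem (s := {ω | k < τ ω}) (by simpa using hk) _]
  exact Finset.sum_congr rfl fun k hk =>
    indicator_of_mem (s := {ω | k < τ ω}) (Finset.mem_range.mp hk) _

section TailSum

variable {Ω : Type*} [MeasurableSpace Ω] {μ : Measure Ω} {τ : Ω → ℕ}

lemma lintegral_natCast_eq_tsum_measure_lt (hτ : Measurable τ) :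
    ∫⁻ ω, (τ ω : ℝ≥0∞) ∂μ = ∑' k, μ {ω | k < τ ω} := by
  have hmeas : ∀ k, MeasurableSet {ω | k < τ ω} := fun k => measurableSet_lt measurable_const hτ
  calc ∫⁻ ω, (τ ω : ℝ≥0∞) ∂μ = ∫⁻ ω, ∑' k, {ω | k < τ ω}.indicator 1 ω ∂μ := by
        congr 1 with ω
        simp [tsum_indicator_setOf_lt]
    _ = ∑' k, μ {ω | k < τ ω} := by
        rw [lintegral_tsum fun k => (measurable_one.indicator (hmeas k)).aemeasurable]
        simp_rw [lintegral_indicator_one (hmeas _)]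

lemma hasSum_measureReal_setOf_lt (hτ : Measurable τ) (hint : Integrable (fun ω => (τ ω : ℝ)) μ) :
    HasSum (fun k => μ.real {ω | k < τ ω}) (∫ ω, (τ ω : ℝ) ∂μ) := by
  have hlint : ∫⁻ ω, (τ ω : ℝ≥0∞) ∂μ = ENNReal.ofReal (∫ ω, (τ ω : ℝ) ∂μ) := by
    rw [ofReal_integral_eq_lintegral_ofReal hint (Eventually.of_forall fun ω => Nat.cast_nonneg _)]
    simp
  have hfin : ∑' k, μ {ω | k < τ ω} ≠ ∞ := by
    rw [← lintegral_natCast_eq_tsum_measure_lt hτ, hlint]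
    exact ENNReal.ofReal_ne_top
  have key := ENNReal.hasSum_toReal hfin
  rwa [← ENNReal.tsum_toReal_eq (ENNReal.ne_top_of_tsum_ne_top hfin),
    ← lintegral_natCast_eq_tsum_measure_lt hτ, hlint,
    ENNReal.toReal_ofReal (integral_nonneg fun ω => Nat.cast_nonneg _)] at key

lemma hasSum_setIntegral_setOf_lt (hτ : Measurable τ) {f : ℕ → Ω → ℝ}
    (hf : ∀ k, Integrable (f k) μ)
    (hsum : Summable fun k => ∫ ω in {ω | k < τ ω}, |f k ω| ∂μ) :
    HasSum (fun k => ∫ ω in {ω | k < τ ω}, f k ω ∂μ)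
      (∫ ω, ∑ k ∈ Finset.range (τ ω), f k ω ∂μ) := by
  have hmeas : ∀ k, MeasurableSet {ω | k < τ ω} := fun k => measurableSet_lt measurable_const hτ
  have key := hasSum_integral_of_summable_integral_norm
    (F := fun k => {ω | k < τ ω}.indicator (f k)) (fun k => (hf k).indicator (hmeas k)) (by
      refine hsum.congr fun k => ?_
      simp_rw [norm_indicator_eq_indicator_norm, Real.norm_eq_abs]
      exact (integral_indicator (hmeas k)).symm)
  simp_rw [integral_indicator (hmeas _)] at key
  simpa only [tsum_indicator_setOf_lt] using key

lemma integrable_sum_range_of_abs_le (hτ : Measurable τ)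
    (hint : Integrable (fun ω => (τ ω : ℝ)) μ) {c : ℕ → ℝ} {C : ℝ} (hc : ∀ k, |c k| ≤ C) :
    Integrable (fun ω => ∑ k ∈ Finset.range (τ ω), c k) μ := by
  refine (hint.const_mul C).mono' ((measurable_from_nat
    (f := fun t => ∑ k ∈ Finset.range t, c k)).comp hτ).aestronglyMeasurable
    (Eventually.of_forall fun ω => ?_)
  calc ‖∑ k ∈ Finset.range (τ ω), c k‖ ≤ ∑ k ∈ Finset.range (τ ω), |c k| := norm_sum_le _ _
    _ ≤ C * τ ω := (Finset.sum_le_sum fun k _ => hc k).trans (by simp [mul_comm])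

lemma hasSum_mul_measureReal_setOf_lt [IsFiniteMeasure μ] (hτ : Measurable τ)
    (hint : Integrable (fun ω => (τ ω : ℝ)) μ) {c : ℕ → ℝ} {C : ℝ} (hc : ∀ k, |c k| ≤ C) :
    HasSum (fun k => c k * μ.real {ω | k < τ ω}) (∫ ω, ∑ k ∈ Finset.range (τ ω), c k ∂μ) := by
  have hsum := hasSum_setIntegral_setOf_lt hτ (fun k => integrable_const (c k))
    (((hasSum_measureReal_setOf_lt hτ hint).summable.mul_left C).of_nonneg_of_le
      (fun k => integral_nonneg fun ω => abs_nonneg _) fun k => by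
        rw [setIntegral_const, smul_eq_mul, mul_comm]
        exact mul_le_mul_of_nonneg_right (hc k) measureReal_nonneg)
  simpa only [setIntegral_const, smul_eq_mul, mul_comm] using hsum

end TailSum

lemma sum_Ioc_add_eq_sum_range {M : Type*} [AddCommMonoid M] (f : ℕ → M) (w t : ℕ) :
    ∑ n ∈ Finset.Ioc w (t + w), f n = ∑ k ∈ Finset.range t, f (w + 1 + k) := by
  rw [show Finset.Ioc w (t + w) = Finset.Ico (w + 1) (t + w + 1) by
      ext; simp only [Finset.mem_Ioc, Finset.mem_Ico]; omega,
    Finset.sum_Ico_eq_sum_range, Nat.add_sub_add_right, Nat.add_sub_cancel]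

lemma card_filter_range_le {N : Set ℕ} [DecidablePred (· ∈ N)] {w q : ℕ}
    (hd : ∀ (n : ℕ) (s : Finset ℕ),
      (∀ m ∈ s, m ∈ N ∧ m ∈ Finset.Ioc w (w + n)) → (s.card : ℝ) ≤ n * q / w) (t : ℕ) :
    ((Finset.range t).filter (w + 1 + · ∈ N)).card ≤ (t * q / w : ℝ) := by
  rw [← Finset.card_image_of_injective _ (add_right_injective (w + 1))]
  refine hd t _ fun m hm => ?_
  obtain ⟨k, hk, rfl⟩ := Finset.mem_image.mp hm
  rw [Finset.mem_filter, Finset.mem_range] at hk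
  exact ⟨hk.2, Finset.mem_Ioc.mpr ⟨by omega, by omega⟩⟩

lemma mul_le_sum_range_ite {N : Set ℕ} [DecidablePred (· ∈ N)] {w q : ℕ} {a : ℝ} (ha : 0 ≤ a)
    (hd : ∀ (n : ℕ) (s : Finset ℕ),
      (∀ m ∈ s, m ∈ N ∧ m ∈ Finset.Ioc w (w + n)) → (s.card : ℝ) ≤ n * q / w) (t : ℕ) :
    a * (1 - q / w) * t ≤ ∑ k ∈ Finset.range t, if w + 1 + k ∈ N then 0 else a := by
  have hsplit : (t : ℝ) = ((Finset.range t).filter (w + 1 + · ∈ N)).card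
      + ((Finset.range t).filter (w + 1 + · ∉ N)).card := by
    rw [← Nat.cast_add, Finset.card_filter_add_card_filter_not, Finset.card_range]
  rw [Finset.sum_ite, Finset.sum_const_zero, Finset.sum_const, nsmul_eq_mul, zero_add]
  calc a * (1 - q / w) * t = a * t - a * (t * q / w) := by ring
    _ ≤ a * t - a * ((Finset.range t).filter (w + 1 + · ∈ N)).card := by
        linarith [mul_le_mul_of_nonneg_left (card_filter_range_le hd t) ha]
    _ = _ := by rw [hsplit]; ring

lemma adapted_sum_Ioc {Ω : Type*} {m0 : MeasurableSpace Ω} {𝒢 : Filtration ℕ m0}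
    {Y : ℕ → Ω → ℝ} (hY : ∀ n, 1 ≤ n → StronglyMeasurable[𝒢 n] (Y n)) (w : ℕ) :
    Adapted 𝒢 fun n ω => ∑ i ∈ Finset.Ioc w n, Y i ω := fun n =>
  Finset.measurable_fun_sum _ fun i hi =>
    ((hY i (by have := (Finset.mem_Ioc.mp hi).1; omega)).mono
      (𝒢.mono (Finset.mem_Ioc.mp hi).2)).measurable

lemma setOf_lt_ae_eq_iInter {Ω : Type*} [MeasurableSpace Ω] {P : Measure Ω} {S : ℕ → Ω → ℝ}
    {τ : Ω → ℕ} {w : ℕ} {b : ℝ}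
    (hτ : ∀ᵐ ω ∂P, w < τ ω ∧ b ≤ S (τ ω) ω ∧ ∀ n, w < n → n < τ ω → S n ω < b) (k : ℕ) :
    {ω | k < τ ω} =ᵐ[P] ⋂ m ∈ Finset.Ioc w k, {ω | S m ω < b} := by
  filter_upwards [hτ] with ω ⟨hwτ, hbτ, hlt⟩
  rw [eq_iff_iff]
  change k < τ ω ↔ ω ∈ ⋂ m ∈ Finset.Ioc w k, {ω | S m ω < b}
  simp only [mem_iInter₂, Finset.mem_Ioc, mem_ofPred_eq]
  refine ⟨fun hk m hm => hlt m hm.1 (by omega), fun h => ?_⟩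
  by_contra! hτk
  exact (h (τ ω) ⟨hwτ, hτk⟩).not_ge hbτ

lemma measurableSet_iInter_lt {Ω : Type*} {m0 : MeasurableSpace Ω} {𝒢 : Filtration ℕ m0}
    {S : ℕ → Ω → ℝ} (hS : Adapted 𝒢 S) (w k : ℕ) (b : ℝ) :
    MeasurableSet[𝒢 k] (⋂ m ∈ Finset.Ioc w k, {ω | S m ω < b}) :=
  Finset.measurableSet_biInter _ fun m hm =>
    measurableSet_lt ((hS m).mono (𝒢.mono (Finset.mem_Ioc.mp hm).2) le_rfl) measurable_const

lemma ite_le_condExp_of_delayed_drift {Ω : Type*} {m0 : MeasurableSpace Ω} {P : Measure Ω}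
    {𝒢 : Filtration ℕ m0} {Y : ℕ → Ω → ℝ} {w : ℕ} {N : Set ℕ} [DecidablePred (· ∈ N)]
    {a a' : ℝ} (ha' : 0 ≤ a')
    (hOut : ∀ n, w < n → n ∉ N → (fun _ => a) ≤ᵐ[P] P[Y n | 𝒢 (n - w - 1)])
    (hIn : ∀ n, w < n → n ∈ N → (fun _ => a') ≤ᵐ[P] P[Y n | 𝒢 (n - w - 1)]) (k : ℕ) :
    (fun _ => if w + 1 + k ∈ N then 0 else a) ≤ᵐ[P] P[Y (w + 1 + k) | 𝒢 k] := by
  have hk : w + 1 + k - w - 1 = k := by omega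
  by_cases hkN : w + 1 + k ∈ N
  · have h := hIn _ (by omega) hkN
    rw [hk] at h
    simp only [hkN, if_true]
    exact h.mono fun ω hω => ha'.trans hω
  · simpa [hkN, hk] using hOut _ (by omega) hkN

theorem delayed_partial_sum_lower_bound_general
    {Ω : Type*} [m0 : MeasurableSpace Ω] (P : Measure Ω) [IsProbabilityMeasure P]
    (𝒢 : Filtration ℕ m0)
    (Y : ℕ → Ω → ℝ)
    (hY2 : ∀ n, 1 ≤ n → MemLp (Y n) 2 P)
    (hadp : ∀ n, 1 ≤ n → StronglyMeasurable[𝒢 n] (Y n))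
    (w q : ℕ)
    (N : Set ℕ)
    (μstar μlow v : ℝ)
    (hμstar : 0 < μstar) (hμlow : 0 < μlow)
    (haOut : ∀ n, w < n → n ∉ N →
      (fun _ => μstar) ≤ᵐ[P] P[Y n | 𝒢 (n - w - 1)])
    (haIn : ∀ n, w < n → n ∈ N →
      (fun _ => μlow) ≤ᵐ[P] P[Y n | 𝒢 (n - w - 1)])
    (hvar : ∀ n, w < n → P[(fun ω => (Y n ω) ^ 2) | 𝒢 (n - 1)] ≤ᵐ[P] (fun _ => v))
    (hd : ∀ (n : ℕ) (s : Finset ℕ),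
      (∀ m ∈ s, m ∈ N ∧ m ∈ Finset.Ioc w (w + n)) → (s.card : ℝ) ≤ n * q / w)
    (S : ℕ → Ω → ℝ) (hS : ∀ n ω, S n ω = ∑ i ∈ Finset.Ioc w n, Y i ω)
    (b : ℝ)
    (τ : Ω → ℕ) (hτmeas : Measurable τ)
    (hτ : ∀ᵐ ω ∂P, w < τ ω ∧ b ≤ S (τ ω) ω ∧ ∀ n, w < n → n < τ ω → S n ω < b)
    (hτint : Integrable (fun ω => (τ ω : ℝ)) P) :
    μstar * (1 - (q : ℝ) / w) * ∫ ω, (τ ω : ℝ) ∂P ≤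
      ∫ ω, (∑ n ∈ Finset.Ioc w (τ ω + w), Y n ω) ∂P := by
  classical
  have hSad : Adapted 𝒢 S := funext₂ hS ▸ adapted_sum_Ioc hadp w
  have hD := fun k => measurableSet_iInter_lt hSad w k b
  have hAD := setOf_lt_ae_eq_iInter hτ
  have hY : ∀ k, Integrable (Y (w + 1 + k)) P := fun k => (hY2 _ (by omega)).integrable one_le_two
  set c : ℕ → ℝ := fun k => if w + 1 + k ∈ N then 0 else μstar
  have hc : ∀ k, |c k| ≤ μstar := fun k => by
    by_cases hkN : w + 1 + k ∈ N <;> simp [c, hkN, hμstar.le, abs_of_pos hμstar]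
  have hsumc := hasSum_mul_measureReal_setOf_lt hτmeas hτint hc
  have hsumY := hasSum_setIntegral_setOf_lt hτmeas hY <|
    ((hasSum_measureReal_setOf_lt hτmeas hτint).summable.mul_left (1 + v)).of_nonneg_of_le
      (fun k => integral_nonneg fun ω => abs_nonneg _) fun k =>
        setIntegral_abs_le_of_condExp_sq_le (𝒢.le _) (hY2 _ (by omega)) (hvar _ (by omega))
          (𝒢.mono (by omega) _ (hD k)) (hAD k)
  calc μstar * (1 - (q : ℝ) / w) * ∫ ω, (τ ω : ℝ) ∂P
      = ∫ ω, μstar * (1 - (q : ℝ) / w) * τ ω ∂P := (integral_const_mul _ _).symm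
    _ ≤ ∫ ω, ∑ k ∈ Finset.range (τ ω), c k ∂P :=
        integral_mono (hτint.const_mul _) (integrable_sum_range_of_abs_le hτmeas hτint hc)
          fun ω => mul_le_sum_range_ite hμstar.le hd _
    _ = ∑' k, c k * P.real {ω | k < τ ω} := hsumc.tsum_eq.symm
    _ ≤ ∑' k, ∫ ω in {ω | k < τ ω}, Y (w + 1 + k) ω ∂P :=
        hsumc.summable.tsum_le_tsum (fun k => mul_measureReal_le_setIntegral_of_le_condExp
          (𝒢.le k) (hY k) (ite_le_condExp_of_delayed_drift hμlow.le haOut haIn k) (hD k) (hAD k))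
          hsumY.summable
    _ = ∫ ω, (∑ n ∈ Finset.Ioc w (τ ω + w), Y n ω) ∂P := by
        simp only [hsumY.tsum_eq, sum_Ioc_add_eq_sum_range]

/-- If `E[τ_b] < ∞`, then the delayed partial sum satisfies the lower bound
`E[ Σ_{n=w+1}^{τ_b + w} Y_n ] ≥ μ* (1 - q/w) E[τ_b]`. -/
theorem delayed_partial_sum_lower_bound
    {Ω : Type*} [m0 : MeasurableSpace Ω] (P : Measure Ω) [IsProbabilityMeasure P]
    (𝒢 : Filtration ℕ m0) (h𝒢0 : 𝒢 0 = ⊥)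
    (Y : ℕ → Ω → ℝ)
    (hY2 : ∀ n, 1 ≤ n → MemLp (Y n) 2 P)
    (hadp : ∀ n, 1 ≤ n → StronglyMeasurable[𝒢 n] (Y n))
    (w q : ℕ) (hq : 0 < q) (hqw : q < w)
    (N : Set ℕ) (hN : ∀ m ∈ N, w < m)
    (μstar μlow μ v : ℝ)
    (hμstar : 0 < μstar) (hμlow : 0 < μlow) (hμ : 0 < μ) (hv : 0 < v)
    (haOut : ∀ n, w < n → n ∉ N →
      (fun _ => μstar) ≤ᵐ[P] P[Y n | 𝒢 (n - w - 1)])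
    (haIn : ∀ n, w < n → n ∈ N →
      (fun _ => μlow) ≤ᵐ[P] P[Y n | 𝒢 (n - w - 1)])
    (hbnd : ∀ n, w < n → P[Y n | 𝒢 (n - 1)] ≤ᵐ[P] (fun _ => μ))
    (hvar : ∀ n, w < n → P[(fun ω => (Y n ω) ^ 2) | 𝒢 (n - 1)] ≤ᵐ[P] (fun _ => v))
    (hd : ∀ (n : ℕ) (s : Finset ℕ),
      (∀ m ∈ s, m ∈ N ∧ m ∈ Finset.Ioc w (w + n)) → (s.card : ℝ) ≤ n * q / w)
    (S : ℕ → Ω → ℝ) (hS : ∀ n ω, S n ω = ∑ i ∈ Finset.Ioc w n, Y i ω)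
    (b : ℝ) (hb : 0 < b)
    (τ : Ω → ℕ) (hτmeas : Measurable τ)
    (hτ : ∀ᵐ ω ∂P, w < τ ω ∧ b ≤ S (τ ω) ω ∧ ∀ n, w < n → n < τ ω → S n ω < b)
    (hτint : Integrable (fun ω => (τ ω : ℝ)) P) :
    μstar * (1 - (q : ℝ) / w) * ∫ ω, (τ ω : ℝ) ∂P ≤
      ∫ ω, (∑ n ∈ Finset.Ioc w (τ ω + w), Y n ω) ∂P :=
  delayed_partial_sum_lower_bound_general (m0 := m0) P 𝒢 Y hY2 hadp w q N μstar μlow v hμstar hμlow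
    haOut haIn hvar hd S hS b τ hτmeas hτ hτint
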